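/- arXiv:2204.13330 — 2 statements merged into one kernel-verified Lean document; each statement's English description precedes it below -/
import Mathlib

section
/- Let (X,d,≪,≤,τ) be a Lorentzian pre-length space and p ∈ (0,1]. Then the p-Lorentz-Wasserstein distance ℓ_p satisfies the reverse triangle inequality: for all Borel probability measures μ₀, μ₁, μ₂ on X, ℓ_p(μ₀,μ₁) + ℓ_p(μ₁,μ₂) ≤ ℓ_p(μ₀,μ₂), with the convention on the left hand side that ∞ − ∞ = −∞. -/
open MeasureTheory Set Filter Topology
open scoped ENNReal NNReal Classical

noncomputable section

/-- A Lorentzian (pre-length) structure on a metric space `X`: a preorder `causal` (`≤`),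
a transitive relation `chron` (`≪`) contained in `causal`, and a lower semicontinuous
time-separation function `tau : X × X → [0,∞]` satisfying the reverse triangle inequality,
vanishing on non-causally related pairs, and positive exactly on chronologically related pairs.
Properness of the metric is imposed via the `ProperSpace` instance in the statements. -/
structure LorentzStructure (X : Type*) [MetricSpace X] where
  causal : X → X → Prop
  chron : X → X → Prop
  tau : X → X → ℝ≥0∞
  causal_refl : ∀ x, causal x x
  causal_trans : ∀ ⦃x y z⦄, causal x y → causal y z → causal x z
  chron_trans : ∀ ⦃x y z⦄, chron x y → chron y z → chron x z
  chron_le_causal : ∀ ⦃x y⦄, chron x y → causal x y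
  tau_lsc : LowerSemicontinuous (fun q : X × X => tau q.1 q.2)
  tau_rev_triangle : ∀ ⦃x y z⦄, causal x y → causal y z → tau x y + tau y z ≤ tau x z
  tau_eq_zero_of_not_causal : ∀ ⦃x y⦄, ¬ causal x y → tau x y = 0
  tau_pos_iff : ∀ x y, 0 < tau x y ↔ chron x y

variable {X : Type*} [MetricSpace X]

namespace LorentzStructure

/-- A causal curve: locally Lipschitz on `[0,1]` and future-directed causal. -/
def IsCausalCurve (L : LorentzStructure X) (γ : ℝ → X) : Prop :=
  (∀ t ∈ Icc (0:ℝ) 1, ∃ C : ℝ≥0, ∃ U ∈ nhdsWithin t (Icc (0:ℝ) 1), LipschitzOnWith C γ U) ∧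
  ∀ s ∈ Icc (0:ℝ) 1, ∀ t ∈ Icc (0:ℝ) 1, s < t → L.causal (γ s) (γ t)

/-- A (maximising, constant speed) geodesic parametrised on `[0,1]`. -/
def IsGeodesicCurve (L : LorentzStructure X) (γ : ℝ → X) : Prop :=
  L.IsCausalCurve γ ∧
  ∀ s ∈ Icc (0:ℝ) 1, ∀ t ∈ Icc (0:ℝ) 1, s < t →
    L.tau (γ s) (γ t) = ENNReal.ofReal (t - s) * L.tau (γ 0) (γ 1)

/-- A timelike geodesic: `γ ∈ TGeo(X)`. -/
def IsTimelikeGeodesicCurve (L : LorentzStructure X) (γ : ℝ → X) : Prop :=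
  L.IsGeodesicCurve γ ∧ 0 < L.tau (γ 0) (γ 1)

def CausallyClosed (L : LorentzStructure X) : Prop :=
  IsClosed {z : X × X | L.causal z.1 z.2}

def LocallyCausallyClosed (L : LorentzStructure X) : Prop :=
  ∀ x : X, ∃ U ∈ nhds x,
    IsClosed ((closure U ×ˢ closure U) ∩ {z : X × X | L.causal z.1 z.2})

def NonTotallyImprisoning (L : LorentzStructure X) : Prop :=
  ∀ K : Set X, IsCompact K → ∃ C : ℝ, 0 < C ∧
    ∀ γ : ℝ → X, L.IsCausalCurve γ → (∀ t ∈ Icc (0:ℝ) 1, γ t ∈ K) →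
      eVariationOn γ (Icc (0:ℝ) 1) ≤ ENNReal.ofReal C

def causalFuture (L : LorentzStructure X) (A : Set X) : Set X := {y | ∃ x ∈ A, L.causal x y}
def causalPast (L : LorentzStructure X) (A : Set X) : Set X := {y | ∃ x ∈ A, L.causal y x}
def chronFuture (L : LorentzStructure X) (A : Set X) : Set X := {y | ∃ x ∈ A, L.chron x y}
def chronPast (L : LorentzStructure X) (A : Set X) : Set X := {y | ∃ x ∈ A, L.chron y x}

def GloballyHyperbolic (L : LorentzStructure X) : Prop :=
  L.NonTotallyImprisoning ∧
  ∀ x y : X, IsCompact ({z | L.causal x z} ∩ {z | L.causal z y})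

def KGloballyHyperbolic (L : LorentzStructure X) : Prop :=
  L.NonTotallyImprisoning ∧
  ∀ K₁ K₂ : Set X, IsCompact K₁ → IsCompact K₂ →
    IsCompact (L.causalFuture K₁ ∩ L.causalPast K₂)

def GeodesicSpace (L : LorentzStructure X) : Prop :=
  ∀ x y : X, L.causal x y → ∃ γ : ℝ → X, L.IsGeodesicCurve γ ∧ γ 0 = x ∧ γ 1 = y

/-- The causally-reversed Lorentzian structure. -/
def reverse (L : LorentzStructure X) : LorentzStructure X where
  causal x y := L.causal y x
  chron x y := L.chron y x
  tau x y := L.tau y x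
  causal_refl := L.causal_refl
  causal_trans _ _ _ h1 h2 := L.causal_trans h2 h1
  chron_trans _ _ _ h1 h2 := L.chron_trans h2 h1
  chron_le_causal _ _ h := L.chron_le_causal h
  tau_lsc := by
    have h : (fun q : X × X => L.tau q.2 q.1)
        = (fun q : X × X => L.tau q.1 q.2) ∘ Prod.swap := rfl
    rw [h]
    exact L.tau_lsc.comp continuous_swap
  tau_rev_triangle := by
    intro x y z h1 h2
    rw [add_comm]
    exact L.tau_rev_triangle h2 h1
  tau_eq_zero_of_not_causal _ _ h := L.tau_eq_zero_of_not_causal h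
  tau_pos_iff x y := L.tau_pos_iff y x

def ForwardTimelikeNonBranching (L : LorentzStructure X) : Prop :=
  ∀ γ₁ γ₂ : ℝ → X, L.IsTimelikeGeodesicCurve γ₁ → L.IsTimelikeGeodesicCurve γ₂ →
    (∃ tb ∈ Ioo (0:ℝ) 1, ∀ t ∈ Icc (0:ℝ) tb, γ₁ t = γ₂ t) →
    ∀ s ∈ Icc (0:ℝ) 1, γ₁ s = γ₂ s

def TimelikeNonBranching (L : LorentzStructure X) : Prop :=
  L.ForwardTimelikeNonBranching ∧ L.reverse.ForwardTimelikeNonBranching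

/-- The `τ`-length of a curve: infimum of `Σ τ(γ_{t_i}, γ_{t_{i+1}})` over partitions of `[0,1]`. -/
def tauLength (L : LorentzStructure X) (γ : ℝ → X) : ℝ≥0∞ :=
  ⨅ (n : ℕ) (T : Fin (n+1) → ℝ) (_ : Monotone T) (_ : T 0 = 0) (_ : T (Fin.last n) = 1),
    ∑ i : Fin n, L.tau (γ (T i.castSucc)) (γ (T i.succ))

end LorentzStructure

/-- Topological support of a measure. -/
def msupport {Y : Type*} [TopologicalSpace Y] [MeasurableSpace Y] (μ : Measure Y) : Set Y :=
  {x | ∀ U : Set Y, IsOpen U → x ∈ U → 0 < μ U}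

/-- The reference measure is finite on bounded sets. -/
def FiniteOnBounded {Y : Type*} [PseudoMetricSpace Y] [MeasurableSpace Y] (m : Measure Y) : Prop :=
  ∀ s : Set Y, Bornology.IsBounded s → m s < ⊤

variable [MeasurableSpace X] [BorelSpace X]

def IsCoupling (μ ν : Measure X) (π : Measure (X × X)) : Prop :=
  π.map Prod.fst = μ ∧ π.map Prod.snd = ν

def IsCausalCoupling (L : LorentzStructure X) (μ ν : Measure X) (π : Measure (X × X)) : Prop :=
  IsCoupling μ ν π ∧ π {z : X × X | ¬ L.causal z.1 z.2} = 0

def IsTimelikeCoupling (L : LorentzStructure X) (μ ν : Measure X) (π : Measure (X × X)) : Prop :=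
  IsCoupling μ ν π ∧ π {z : X × X | ¬ L.chron z.1 z.2} = 0

/-- The total cost `∫ τ(x,y)^p dπ`. -/
def pCost (L : LorentzStructure X) (p : ℝ) (π : Measure (X × X)) : ℝ≥0∞ :=
  ∫⁻ z, L.tau z.1 z.2 ^ p ∂π

/-- The `p`-Lorentz-Wasserstein distance `ℓ_p(μ,ν)`, with value `⊥ = -∞` when there is no
causal coupling. -/
def ellp (L : LorentzStructure X) (p : ℝ) (μ ν : Measure X) : EReal :=
  sSup {c : EReal | ∃ π : Measure (X × X), IsCausalCoupling L μ ν π ∧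
    c = ((pCost L p π ^ (1/p) : ℝ≥0∞) : EReal)}

/-- `π` is an `ℓ_p`-optimal causal coupling. -/
def IsOptCausalCoupling (L : LorentzStructure X) (p : ℝ) (μ ν : Measure X)
    (π : Measure (X × X)) : Prop :=
  IsCausalCoupling L μ ν π ∧ ((pCost L p π ^ (1/p) : ℝ≥0∞) : EReal) = ellp L p μ ν

/-- The cost `ℓ(x,y)^p`, where `ℓ(x,y) = τ(x,y)` if `x ≤ y` and `-∞` otherwise. -/
def ellCostP (L : LorentzStructure X) (p : ℝ) (x y : X) : EReal :=
  if L.causal x y then ((L.tau x y ^ p : ℝ≥0∞) : EReal) else ⊥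

/-- Auxiliary `q`-th power on `EReal` (only meaningful for nonnegative or `-∞` arguments). -/
def erealRpow (c : EReal) (q : ℝ) : EReal :=
  if c = ⊥ then ⊥ else if c = ⊤ then ⊤ else ((ENNReal.ofReal c.toReal ^ q : ℝ≥0∞) : EReal)

/-- The integral `∫ ℓ(x,y)^p dπ`, with value `-∞` as soon as `π` charges non-causally
related pairs. -/
def ellIntegralP (L : LorentzStructure X) (p : ℝ) (π : Measure (X × X)) : EReal :=
  if π {z : X × X | ¬ L.causal z.1 z.2} = 0 then ((pCost L p π : ℝ≥0∞) : EReal) else ⊥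

/-- `(μ,ν)` is timelike `p`-dualisable by the coupling `π`. -/
def TimelikePDualisable (L : LorentzStructure X) (p : ℝ) (μ ν : Measure X)
    (π : Measure (X × X)) : Prop :=
  0 < ellp L p μ ν ∧ ellp L p μ ν < ⊤ ∧
  IsTimelikeCoupling L μ ν π ∧ IsOptCausalCoupling L p μ ν π ∧
  ∃ a b : X → ℝ, Measurable a ∧ Measurable b ∧
    Integrable (fun z : X × X => a z.1 + b z.2) (μ.prod ν) ∧
    ∀ x ∈ msupport μ, ∀ y ∈ msupport ν, ellCostP L p x y ≤ ((a x + b y : ℝ) : EReal)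

/-- `ℓ^p`-cyclical monotonicity of a set `Γ ⊆ X × X`. -/
def CyclicallyMonotone (L : LorentzStructure X) (p : ℝ) (Γ : Set (X × X)) : Prop :=
  ∀ (n : ℕ) (f : Fin n → X × X), (∀ i, f i ∈ Γ) → ∀ σ : Equiv.Perm (Fin n),
    (∑ i, ellCostP L p (f i).1 (f (σ i)).2) ≤ ∑ i, ellCostP L p (f i).1 (f i).2

/-- `(μ,ν)` is strongly timelike `p`-dualisable. -/
def StronglyTimelikePDualisable (L : LorentzStructure X) (p : ℝ) (μ ν : Measure X) : Prop :=
  (∃ π : Measure (X × X), TimelikePDualisable L p μ ν π) ∧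
  ∃ Γ : Set (X × X), MeasurableSet Γ ∧ CyclicallyMonotone L p Γ ∧
    Γ ⊆ {z : X × X | L.chron z.1 z.2} ∩ (msupport μ ×ˢ msupport ν) ∧
    ∀ π : Measure (X × X), IsCausalCoupling L μ ν π →
      (IsOptCausalCoupling L p μ ν π ↔ π Γ = 1)

/-- `(μ_t)_{t ∈ [0,1]}` is an `ℓ_p`-geodesic. -/
def IsLpGeodesic (L : LorentzStructure X) (p : ℝ) (μ : ℝ → Measure X) : Prop :=
  ∀ s t : ℝ, 0 ≤ s → s ≤ t → t ≤ 1 →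
    ellp L p (μ s) (μ t) = ((t - s : ℝ) : EReal) * ellp L p (μ 0) (μ 1)

/-- An `ℓ_p`-dynamical optimal plan from `μ₀` to `μ₁`. -/
def IsDynOptPlan (L : LorentzStructure X) (p : ℝ) (μ₀ μ₁ : Measure X)
    (η : Measure (ℝ → X)) : Prop :=
  IsProbabilityMeasure η ∧
  η.map (fun γ => γ 0) = μ₀ ∧ η.map (fun γ => γ 1) = μ₁ ∧
  IsLpGeodesic L p (fun t => η.map (fun γ => γ t)) ∧
  ∀ᵐ γ ∂η, L.IsGeodesicCurve γ

/-- The stretching/restriction operator on curves. -/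
def restrCurve (s₁ s₂ : ℝ) (γ : ℝ → X) : ℝ → X := fun t => γ ((1 - t) * s₁ + t * s₂)

/-- Density of `μ` with respect to `m`. -/
def entDensity (m μ : Measure X) (x : X) : ℝ := (μ.rnDeriv m x).toReal

/-- `μ` belongs to the finiteness domain of the relative entropy `Ent(·|m)`. -/
def EntFinite (m μ : Measure X) : Prop :=
  μ ≪ m ∧ Integrable (fun x => entDensity m μ x * Real.log (entDensity m μ x)) m

/-- The Boltzmann-Shannon relative entropy `Ent(μ|m)` (real value; meaningful on its
finiteness domain). -/
def ent (m μ : Measure X) : ℝ :=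
  ∫ x, entDensity m μ x * Real.log (entDensity m μ x) ∂m

/-- The Boltzmann-Shannon relative entropy with values in `[-∞,∞]`. -/
def entE (m μ : Measure X) : EReal :=
  if EntFinite m μ then ((ent m μ : ℝ) : EReal)
  else if μ ≪ m ∧
      Integrable (fun x => max (entDensity m μ x * Real.log (entDensity m μ x)) 0) m then ⊥
  else ⊤

/-- `U_N(μ|m) = exp(-Ent(μ|m)/N)`, with values in `[0,∞]`. -/
def uN (N : ℝ) (m μ : Measure X) : ℝ≥0∞ :=
  if entE m μ = ⊤ then 0
  else if entE m μ = ⊥ then ⊤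
  else ENNReal.ofReal (Real.exp (-(entE m μ).toReal / N))

/-- The comparison function `s_κ`. -/
def sK (κ θ : ℝ) : ℝ :=
  if 0 < κ then Real.sin (Real.sqrt κ * θ) / Real.sqrt κ
  else if κ < 0 then Real.sinh (Real.sqrt (-κ) * θ) / Real.sqrt (-κ)
  else θ

/-- The distortion coefficients `σ^{(t)}_κ(θ)`, with value `+∞` when `κ θ² ≥ π²`. -/
def sigmaCoef (t κ θ : ℝ) : ℝ≥0∞ :=
  if κ * θ ^ 2 = 0 then ENNReal.ofReal t
  else if κ * θ ^ 2 < Real.pi ^ 2 then ENNReal.ofReal (sK κ (t * θ) / sK κ θ)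
  else ⊤

/-- `‖τ‖_{L²(π)}`. -/
def tauL2 (L : LorentzStructure X) (π : Measure (X × X)) : ℝ :=
  ((∫⁻ z, L.tau z.1 z.2 ^ (2:ℝ) ∂π) ^ ((1:ℝ)/2)).toReal

/-- Semi-convexity on `[0,1]`. -/
def SemiConvexOnIcc (e : ℝ → ℝ) : Prop :=
  ∃ C : ℝ, ConvexOn ℝ (Icc (0:ℝ) 1) (fun t => e t + C * t ^ 2)

/-- The distributional inequality `e'' - invN ⬝ (e')² ≥ c` on `[0,1]`. -/
def DistribIneq (e : ℝ → ℝ) (invN c : ℝ) : Prop :=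
  ∀ φ : ℝ → ℝ, ContDiff ℝ (⊤ : ℕ∞) φ → HasCompactSupport φ → (∀ t, 0 ≤ φ t) →
    Function.support φ ⊆ Ioo (0:ℝ) 1 →
    c * ∫ t in Ioo (0:ℝ) 1, φ t ≤
      (∫ t in Ioo (0:ℝ) 1, e t * deriv (deriv φ) t) -
        invN * ∫ t in Ioo (0:ℝ) 1, (deriv (fun s => e s) t) ^ 2 * φ t

/-- Existence of an entropy-convex `ℓ_p`-geodesic between `μ₀` and `μ₁` witnessing the
differential inequality `e'' - e'²/N ≥ c`. -/
def TCDGeodesicExists (L : LorentzStructure X) (m : Measure X) (p invN c : ℝ)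
    (μ₀ μ₁ : Measure X) : Prop :=
  ∃ μ : ℝ → Measure X, (∀ t ∈ Icc (0:ℝ) 1, IsProbabilityMeasure (μ t)) ∧
    μ 0 = μ₀ ∧ μ 1 = μ₁ ∧ IsLpGeodesic L p μ ∧
    (∀ t ∈ Icc (0:ℝ) 1, EntFinite m (μ t)) ∧
    SemiConvexOnIcc (fun t => ent m (μ t)) ∧
    DistribIneq (fun t => ent m (μ t)) invN c

/-- The timelike curvature-dimension condition `TCD^e_p(K,N)`. -/
def TCD (L : LorentzStructure X) (m : Measure X) (p K N : ℝ) : Prop :=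
  ∀ μ₀ μ₁ : Measure X, IsProbabilityMeasure μ₀ → IsProbabilityMeasure μ₁ →
    EntFinite m μ₀ → EntFinite m μ₁ →
    ∀ π : Measure (X × X), TimelikePDualisable L p μ₀ μ₁ π →
    TCDGeodesicExists L m p (1/N) (K * (∫⁻ z, L.tau z.1 z.2 ^ (2:ℝ) ∂π).toReal) μ₀ μ₁

/-- The weak timelike curvature-dimension condition `wTCD^e_p(K,N)`. -/
def wTCD (L : LorentzStructure X) (m : Measure X) (p K N : ℝ) : Prop :=
  ∀ μ₀ μ₁ : Measure X, IsProbabilityMeasure μ₀ → IsProbabilityMeasure μ₁ →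
    EntFinite m μ₀ → EntFinite m μ₁ →
    IsCompact (msupport μ₀) → IsCompact (msupport μ₁) →
    StronglyTimelikePDualisable L p μ₀ μ₁ →
    ∀ π : Measure (X × X), TimelikePDualisable L p μ₀ μ₁ π →
    TCDGeodesicExists L m p (1/N) (K * (∫⁻ z, L.tau z.1 z.2 ^ (2:ℝ) ∂π).toReal) μ₀ μ₁

/-- The timelike measure-contraction property `TMCP^e(K,N)` (w.r.t. the exponent `p`). -/
def TMCP (L : LorentzStructure X) (m : Measure X) (p K N : ℝ) : Prop :=
  ∀ μ₀ : Measure X, IsProbabilityMeasure μ₀ → EntFinite m μ₀ → IsCompact (msupport μ₀) →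
    ∀ x₁ : X, (∀ᵐ x ∂μ₀, L.chron x x₁) →
    ∃ μ : ℝ → Measure X, (∀ t ∈ Icc (0:ℝ) 1, IsProbabilityMeasure (μ t)) ∧
      μ 0 = μ₀ ∧ μ 1 = Measure.dirac x₁ ∧ IsLpGeodesic L p μ ∧
      ∀ t ∈ Ico (0:ℝ) 1,
        sigmaCoef (1-t) (K/N) (((∫⁻ x, L.tau x x₁ ^ (2:ℝ) ∂μ₀) ^ ((1:ℝ)/2)).toReal) * uN N m μ₀
          ≤ uN N m (μ t)

/-- An `ℓ_p`-geodesic parametrised on `[-1,1]`. -/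
def IsLpGeodesicSym (L : LorentzStructure X) (p : ℝ) (μ : ℝ → Measure X) : Prop :=
  ∀ s t : ℝ, -1 ≤ s → s ≤ t → t ≤ 1 →
    ellp L p (μ s) (μ t) = (((t - s)/2 : ℝ) : EReal) * ellp L p (μ (-1)) (μ 1)

/-- Synthetic timelike Ricci curvature bounded above by `K` (w.r.t. `p`, `r₀` and the
remainder function `ω`). -/
def RicciUpperBound (L : LorentzStructure X) (m : Measure X) (p K r₀ : ℝ) (ω : ℝ → ℝ) : Prop :=
  ∀ r : ℝ, 0 < r → r < r₀ →
    ∀ x y : X, dist x y = r →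
      (Metric.ball x (r^4) ×ˢ Metric.ball y (r^2) ⊆ {z : X × X | L.chron z.1 z.2}) →
    ∀ μ₀ : Measure X, IsProbabilityMeasure μ₀ → EntFinite m μ₀ →
      msupport μ₀ ⊆ Metric.ball x (r^4) →
    ∃ μ : ℝ → Measure X, (∀ t ∈ Icc (-1:ℝ) 1, IsProbabilityMeasure (μ t)) ∧
      μ 0 = μ₀ ∧ IsLpGeodesicSym L p μ ∧
      msupport (μ 1) ⊆ Metric.ball y (r^2) ∧
      (msupport (μ (-1)) ×ˢ msupport (μ 1) ⊆ {z : X × X | L.causal z.1 z.2}) ∧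
      (∀ t ∈ Icc (-1:ℝ) 1, msupport (μ t) ⊆ Metric.ball x (10 * r₀)) ∧
      entE m (μ (-1)) + entE m (μ 1) ≤ (((K + ω r) * r^2 + 2 * ent m μ₀ : ℝ) : EReal)

/-- `V` is achronal. -/
def Achronal (L : LorentzStructure X) (V : Set X) : Prop :=
  ∀ x ∈ V, ∀ y ∈ V, ¬ L.chron x y

/-- `V` is future timelike complete: for each `x ∈ I⁺(V)`, `J⁻(x) ∩ V` has compact
closure in `V`. -/
def FutureTimelikeComplete (L : LorentzStructure X) (V : Set X) : Prop :=
  ∀ x ∈ L.chronFuture V, IsCompact (closure ({y | L.causal y x} ∩ V) ∩ V)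

/-- `V` is past timelike complete. -/
def PastTimelikeComplete (L : LorentzStructure X) (V : Set X) : Prop :=
  ∀ x ∈ L.chronPast V, IsCompact (closure ({y | L.causal x y} ∩ V) ∩ V)

/-- The signed time-separation function from `V`. -/
def tauV (L : LorentzStructure X) (V : Set X) (x : X) : EReal :=
  if x ∈ L.chronFuture V then ⨆ y ∈ V, ((L.tau y x : ℝ≥0∞) : EReal)
  else if x ∈ L.chronPast V then - ⨆ y ∈ V, ((L.tau x y : ℝ≥0∞) : EReal)
  else 0

/-- The `τ`-ball `B^τ(x₀,r)`. -/
def tauBall (L : LorentzStructure X) (x₀ : X) (r : ℝ) : Set X :=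
  {x | (L.chron x₀ x ∨ x = x₀) ∧ L.tau x₀ x < ENNReal.ofReal r}

/-- `E ⊆ I⁺(x₀) ∪ {x₀}` is `τ`-star-shaped with respect to `x₀`. -/
def TauStarShaped (L : LorentzStructure X) (x₀ : X) (E : Set X) : Prop :=
  ∀ x ∈ E, ∀ t ∈ Ioc (0:ℝ) 1, ∀ γ : ℝ → X,
    L.IsGeodesicCurve γ → γ 0 = x₀ → γ 1 = x → γ t ∈ E

end


section ReverseTriangleHelpers

open ProbabilityTheory

/-- Two-point concavity-type inequality in `ℝ≥0∞` for `p ∈ (0,1]`. -/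
private lemma ennreal_weighted_rpow_le {p : ℝ} (hp0 : 0 < p) (hp1 : p ≤ 1)
    {w₁ w₂ : ℝ≥0∞} (hw : w₁ + w₂ = 1) (h1 : w₁ ≠ 0) (h2 : w₂ ≠ 0) (a b : ℝ≥0∞) :
    w₁ ^ (1 - p) * a ^ p + w₂ ^ (1 - p) * b ^ p ≤ (a + b) ^ p := by
  have h1t : w₁ ≠ ⊤ := by
    intro h; rw [h] at hw; simp at hw
  have h2t : w₂ ≠ ⊤ := by
    intro h; rw [h] at hw; simp at hw
  have hq : 1 ≤ 1 / p := by
    rw [le_div_iff₀ hp0, one_mul]; exact hp1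
  set x := a / w₁ with hx
  set y := b / w₂ with hy
  have hxa : w₁ * x = a := ENNReal.mul_div_cancel h1 h1t
  have hyb : w₂ * y = b := ENNReal.mul_div_cancel h2 h2t
  have hmean := ENNReal.rpow_arith_mean_le_arith_mean2_rpow w₁ w₂ (x ^ p) (y ^ p) hw hq
  have hxp : (x ^ p) ^ (1 / p) = x := by
    rw [← ENNReal.rpow_mul, mul_one_div_cancel hp0.ne', ENNReal.rpow_one]
  have hyp : (y ^ p) ^ (1 / p) = y := by
    rw [← ENNReal.rpow_mul, mul_one_div_cancel hp0.ne', ENNReal.rpow_one]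
  rw [hxp, hyp] at hmean
  have hkey : w₁ * x ^ p + w₂ * y ^ p ≤ (a + b) ^ p := by
    calc w₁ * x ^ p + w₂ * y ^ p
        = ((w₁ * x ^ p + w₂ * y ^ p) ^ (1 / p)) ^ p := by
          rw [← ENNReal.rpow_mul, one_div_mul_cancel hp0.ne', ENNReal.rpow_one]
      _ ≤ (w₁ * x + w₂ * y) ^ p := ENNReal.rpow_le_rpow hmean hp0.le
      _ = (a + b) ^ p := by rw [hxa, hyb]
  refine le_trans (le_of_eq ?_) hkey
  have haux : ∀ (w c : ℝ≥0∞), w ≠ 0 → w ≠ ⊤ → w ^ (1 - p) * c ^ p = w * (c / w) ^ p := by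
    intro w c hw0 hwt
    have hwp0 : w ^ p ≠ 0 := by
      simp [ENNReal.rpow_eq_zero_iff, hw0, hwt, hp0, hp0.not_gt]
    have hwpt : w ^ p ≠ ⊤ := ENNReal.rpow_ne_top_of_nonneg hp0.le hwt
    have hsub : w ^ (1 - p) = w / w ^ p := by
      rw [ENNReal.eq_div_iff hwp0 hwpt, ← ENNReal.rpow_add _ _ hw0 hwt]
      norm_num
    rw [hsub, ENNReal.div_rpow_of_nonneg _ _ hp0.le, div_eq_mul_inv, div_eq_mul_inv,
      mul_assoc, mul_comm (c ^ p) ((w ^ p)⁻¹), ← mul_assoc]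
  rw [haux w₁ a h1 h1t, haux w₂ b h2 h2t]

/-- Reverse Minkowski inequality for `p ∈ (0,1]` in `ℝ≥0∞`. -/
private lemma lintegral_rpow_superadd {α : Type*} [MeasurableSpace α] (ρ : Measure α)
    {f g : α → ℝ≥0∞} (hf : Measurable f) (hg : Measurable g)
    {p : ℝ} (hp0 : 0 < p) (hp1 : p ≤ 1) :
    (∫⁻ w, f w ^ p ∂ρ) ^ (1 / p) + (∫⁻ w, g w ^ p ∂ρ) ^ (1 / p)
      ≤ (∫⁻ w, (f w + g w) ^ p ∂ρ) ^ (1 / p) := by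
  have hq0 : 0 < 1 / p := by positivity
  set A := ∫⁻ w, f w ^ p ∂ρ with hA
  set B := ∫⁻ w, g w ^ p ∂ρ with hB
  set C := ∫⁻ w, (f w + g w) ^ p ∂ρ with hC
  have hAC : A ≤ C :=
    lintegral_mono fun w => ENNReal.rpow_le_rpow le_self_add hp0.le
  have hBC : B ≤ C :=
    lintegral_mono fun w => ENNReal.rpow_le_rpow le_add_self hp0.le
  rcases eq_or_ne A 0 with hA0 | hA0
  · rw [hA0, ENNReal.zero_rpow_of_pos hq0, zero_add]
    exact ENNReal.rpow_le_rpow hBC hq0.le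
  rcases eq_or_ne B 0 with hB0 | hB0
  · rw [hB0, ENNReal.zero_rpow_of_pos hq0, add_zero]
    exact ENNReal.rpow_le_rpow hAC hq0.le
  rcases eq_or_ne A ⊤ with hAt | hAt
  · have : C = ⊤ := top_le_iff.mp (hAt ▸ hAC)
    rw [this, ENNReal.top_rpow_of_pos hq0]
    exact le_top
  rcases eq_or_ne B ⊤ with hBt | hBt
  · have : C = ⊤ := top_le_iff.mp (hBt ▸ hBC)
    rw [this, ENNReal.top_rpow_of_pos hq0]
    exact le_top
  -- main case
  set a := A ^ (1 / p) with ha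
  set b := B ^ (1 / p) with hb
  have ha0 : a ≠ 0 := by
    simp [ha, ENNReal.rpow_eq_zero_iff, hA0, hAt, hq0, hq0.not_gt]
  have hat : a ≠ ⊤ := ENNReal.rpow_ne_top_of_nonneg hq0.le hAt
  have hb0 : b ≠ 0 := by
    simp [hb, ENNReal.rpow_eq_zero_iff, hB0, hBt, hq0, hq0.not_gt]
  have hbt : b ≠ ⊤ := ENNReal.rpow_ne_top_of_nonneg hq0.le hBt
  set S := a + b with hS
  have hS0 : S ≠ 0 := by simp [hS, ha0, hb0]
  have hSt : S ≠ ⊤ := ENNReal.add_ne_top.mpr ⟨hat, hbt⟩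
  have hw : a / S + b / S = 1 := by
    rw [ENNReal.div_add_div_same, ENNReal.div_self hS0 hSt]
  have hw1 : a / S ≠ 0 := by simp [ENNReal.div_eq_zero_iff, ha0, hSt]
  have hw2 : b / S ≠ 0 := by simp [ENNReal.div_eq_zero_iff, hb0, hSt]
  have hfp : Measurable fun w => f w ^ p :=
    ENNReal.continuous_rpow_const.measurable.comp hf
  have hgp : Measurable fun w => g w ^ p :=
    ENNReal.continuous_rpow_const.measurable.comp hg
  have hpt : ∀ w, (a / S) ^ (1 - p) * f w ^ p + (b / S) ^ (1 - p) * g w ^ p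
      ≤ (f w + g w) ^ p := fun w =>
    ennreal_weighted_rpow_le hp0 hp1 hw hw1 hw2 (f w) (g w)
  have hint : (a / S) ^ (1 - p) * A + (b / S) ^ (1 - p) * B ≤ C := by
    have := lintegral_mono (μ := ρ) hpt
    rwa [lintegral_add_left (hfp.const_mul _), lintegral_const_mul _ hfp,
      lintegral_const_mul _ hgp] at this
  have hApow : A = a ^ p := by
    rw [ha, ← ENNReal.rpow_mul, one_div_mul_cancel hp0.ne', ENNReal.rpow_one]
  have hBpow : B = b ^ p := by
    rw [hb, ← ENNReal.rpow_mul, one_div_mul_cancel hp0.ne', ENNReal.rpow_one]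
  have hS1p0 : S ^ (1 - p) ≠ 0 := by
    simp [ENNReal.rpow_eq_zero_iff, hS0, hSt]
  have hS1pt : S ^ (1 - p) ≠ ⊤ := ENNReal.rpow_ne_top_of_nonneg (by linarith) hSt
  have hterm : ∀ (c : ℝ≥0∞), c ≠ 0 → c ≠ ⊤ →
      (c / S) ^ (1 - p) * c ^ p = c / S ^ (1 - p) := by
    intro c hc0 hct
    rw [ENNReal.div_rpow_of_nonneg _ _ (by linarith : (0:ℝ) ≤ 1 - p),
      div_eq_mul_inv, mul_assoc, mul_comm ((S ^ (1 - p))⁻¹) (c ^ p), ← mul_assoc,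
      ← ENNReal.rpow_add _ _ hc0 hct, ← div_eq_mul_inv]
    norm_num
  have hsum : (a / S) ^ (1 - p) * A + (b / S) ^ (1 - p) * B = S ^ p := by
    rw [hApow, hBpow, hterm a ha0 hat, hterm b hb0 hbt, ENNReal.div_add_div_same, ← hS]
    rw [eq_comm, ENNReal.eq_div_iff hS1p0 hS1pt, ← ENNReal.rpow_add _ _ hS0 hSt,
      show (1 - p) + p = 1 by ring, ENNReal.rpow_one]
  have hfin : S ^ p ≤ C := hsum ▸ hint
  calc S = (S ^ p) ^ (1 / p) := by
        rw [← ENNReal.rpow_mul, mul_one_div_cancel hp0.ne', ENNReal.rpow_one]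
    _ ≤ C ^ (1 / p) := ENNReal.rpow_le_rpow hfin hq0.le

variable {X : Type*} [MetricSpace X] [ProperSpace X] [MeasurableSpace X] [BorelSpace X]

/-- Gluing of causal couplings: the glued plan is a causal coupling whose `p`-cost
dominates the sum of the costs. -/
private lemma exists_glued_coupling (L : LorentzStructure X) {p : ℝ}
    (hp0 : 0 < p) (hp1 : p ≤ 1) {μ₀ μ₁ μ₂ : Measure X}
    [IsProbabilityMeasure μ₀] [IsProbabilityMeasure μ₁] [IsProbabilityMeasure μ₂]
    {π₁ π₂ : Measure (X × X)}
    (h₁ : IsCausalCoupling L μ₀ μ₁ π₁) (h₂ : IsCausalCoupling L μ₁ μ₂ π₂) :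
    ∃ π : Measure (X × X), IsCausalCoupling L μ₀ μ₂ π ∧
      pCost L p π₁ ^ (1 / p) + pCost L p π₂ ^ (1 / p) ≤ pCost L p π ^ (1 / p) := by
  classical
  haveI : StandardBorelSpace X := inferInstance
  haveI : Nonempty X := by
    by_contra hX
    rw [not_nonempty_iff] at hX
    have h1 : μ₁ Set.univ = 1 := measure_univ
    rw [Set.univ_eq_empty_iff.mpr hX, measure_empty] at h1
    exact zero_ne_one h1
  haveI hπ₁prob : IsProbabilityMeasure π₁ := by
    constructor
    have h : (π₁.map Prod.fst) Set.univ = 1 := by rw [h₁.1.1]; exact measure_univ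
    rwa [Measure.map_apply measurable_fst MeasurableSet.univ, Set.preimage_univ] at h
  haveI hπ₂prob : IsProbabilityMeasure π₂ := by
    constructor
    have h : (π₂.map Prod.fst) Set.univ = 1 := by rw [h₂.1.1]; exact measure_univ
    rwa [Measure.map_apply measurable_fst MeasurableSet.univ, Set.preimage_univ] at h
  have hfst2 : π₂.fst = μ₁ := h₂.1.1
  have hdis : μ₁ ⊗ₘ π₂.condKernel = π₂ := by
    rw [← hfst2]; exact π₂.disintegrate π₂.condKernel
  set κ' : Kernel (X × X) X := π₂.condKernel.comap Prod.snd measurable_snd with hκ'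
  haveI : IsMarkovKernel κ' := by
    rw [hκ']
    infer_instance
  set ρm : Measure ((X × X) × X) := π₁ ⊗ₘ κ' with hρm
  haveI : IsProbabilityMeasure ρm := by
    constructor
    rw [hρm, Measure.compProd_apply_univ]
    exact measure_univ
  set h : (X × X) × X → X × X := fun w => (w.1.1, w.2) with hh
  set g : (X × X) × X → X × X := fun w => (w.1.2, w.2) with hg
  have mh : Measurable h := (measurable_fst.comp measurable_fst).prodMk measurable_snd
  have mg : Measurable g := (measurable_snd.comp measurable_fst).prodMk measurable_snd
  have hmapfst : ρm.map Prod.fst = π₁ := Measure.fst_compProd π₁ κ'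
  have hmapg : ρm.map g = π₂ := by
    ext s hs
    rw [Measure.map_apply mg hs, hρm, Measure.compProd_apply (mg hs), ← hdis,
      Measure.compProd_apply hs]
    have hcong : ∀ a : X × X, κ' a (Prod.mk a ⁻¹' (g ⁻¹' s))
        = π₂.condKernel a.2 (Prod.mk a.2 ⁻¹' s) := by
      intro a
      rw [hκ', Kernel.comap_apply]
      rfl
    rw [lintegral_congr hcong, ← h₁.1.2,
      lintegral_map (Kernel.measurable_kernel_prodMk_left hs) measurable_snd]
  refine ⟨ρm.map h, ⟨⟨?_, ?_⟩, ?_⟩, ?_⟩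
  · -- first marginal
    rw [Measure.map_map measurable_fst mh,
      show (Prod.fst ∘ h) = (Prod.fst ∘ (Prod.fst : (X × X) × X → X × X)) from rfl,
      ← Measure.map_map measurable_fst measurable_fst, hmapfst, h₁.1.1]
  · -- second marginal
    rw [Measure.map_map measurable_snd mh,
      show (Prod.snd ∘ h) = (Prod.snd ∘ g) from rfl,
      ← Measure.map_map measurable_snd mg, hmapg, h₂.1.2]
  · -- causality
    set N := {z : X × X | ¬ L.causal z.1 z.2} with hN
    set B := Prod.fst ⁻¹' (toMeasurable π₁ N) ∪ g ⁻¹' (toMeasurable π₂ N) with hB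
    have hρ1 : ρm (Prod.fst ⁻¹' (toMeasurable π₁ N)) = 0 := by
      rw [← Measure.map_apply measurable_fst (measurableSet_toMeasurable _ _), hmapfst,
        measure_toMeasurable]
      exact h₁.2
    have hρ2 : ρm (g ⁻¹' (toMeasurable π₂ N)) = 0 := by
      rw [← Measure.map_apply mg (measurableSet_toMeasurable _ _), hmapg,
        measure_toMeasurable]
      exact h₂.2
    have hBnull : ρm B = 0 := measure_union_null hρ1 hρ2
    have hBm : MeasurableSet B :=
      (measurable_fst (measurableSet_toMeasurable _ _)).union
        (mg (measurableSet_toMeasurable _ _))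
    have hgood : ∀ w ∉ B, L.causal w.1.1 w.1.2 ∧ L.causal w.1.2 w.2 := by
      intro w hw
      rw [hB, Set.mem_union, not_or] at hw
      constructor
      · by_contra hc
        exact hw.1 (subset_toMeasurable _ _ hc)
      · by_contra hc
        exact hw.2 (subset_toMeasurable _ _ hc)
    refine le_antisymm (ENNReal.le_of_forall_pos_le_add fun ε hε _ => ?_) zero_le
    obtain ⟨F, hFB, hFclosed, hFlt⟩ :=
      hBm.compl.exists_isClosed_diff_lt (measure_ne_top ρm _)
        (ε := (ε : ℝ≥0∞)) (by exact_mod_cast hε.ne')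
    set A := ⋃ m, h '' (F ∩ compactCovering ((X × X) × X) m) with hA
    have hcont : Continuous h :=
      (continuous_fst.comp continuous_fst).prodMk continuous_snd
    have hAm : MeasurableSet A :=
      MeasurableSet.iUnion fun m =>
        (((isCompact_compactCovering _ m).inter_left hFclosed).image hcont).isClosed.measurableSet
    have hNA : N ⊆ Aᶜ := by
      intro z hz hzA
      rw [hA, Set.mem_iUnion] at hzA
      obtain ⟨m, w, hwmem, hwz⟩ := hzA
      have hwB : w ∉ B := fun hwB => (hFB hwmem.1) hwB
      obtain ⟨hc1, hc2⟩ := hgood w hwB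
      have : L.causal z.1 z.2 := by
        rw [← hwz]
        exact L.causal_trans hc1 hc2
      exact hz this
    have hpre : h ⁻¹' Aᶜ ⊆ Fᶜ := by
      intro w hwpre hwF
      have : w ∈ ⋃ m, compactCovering ((X × X) × X) m := by
        rw [iUnion_compactCovering]; trivial
      rw [Set.mem_iUnion] at this
      obtain ⟨m, hm⟩ := this
      exact hwpre (Set.mem_iUnion.mpr ⟨m, Set.mem_image_of_mem h ⟨hwF, hm⟩⟩)
    calc (ρm.map h) N ≤ (ρm.map h) Aᶜ := measure_mono hNA
      _ = ρm (h ⁻¹' Aᶜ) := Measure.map_apply mh hAm.compl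
      _ ≤ ρm (Bᶜ \ F ∪ B) := by
          refine measure_mono (hpre.trans ?_)
          intro w hwF
          by_cases hwB : w ∈ B
          · exact Or.inr hwB
          · exact Or.inl ⟨hwB, hwF⟩
      _ ≤ ρm (Bᶜ \ F) + ρm B := measure_union_le _ _
      _ ≤ 0 + ε := by rw [hBnull, add_zero, zero_add]; exact hFlt.le
  · -- cost inequality
    have mτ : Measurable fun z : X × X => L.tau z.1 z.2 := L.tau_lsc.measurable
    have mτp : Measurable fun z : X × X => L.tau z.1 z.2 ^ p :=
      ENNReal.continuous_rpow_const.measurable.comp mτ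
    set f : (X × X) × X → ℝ≥0∞ := fun w => L.tau w.1.1 w.1.2 with hf
    set gτ : (X × X) × X → ℝ≥0∞ := fun w => L.tau w.1.2 w.2 with hgτ
    have mf : Measurable f := mτ.comp measurable_fst
    have mgτ : Measurable gτ := mτ.comp mg
    have hcost1 : pCost L p π₁ = ∫⁻ w, f w ^ p ∂ρm := by
      rw [pCost, ← hmapfst, lintegral_map mτp measurable_fst]
    have hcost2 : pCost L p π₂ = ∫⁻ w, gτ w ^ p ∂ρm := by
      rw [pCost, ← hmapg, lintegral_map mτp mg]
    have hcostπ : pCost L p (ρm.map h) = ∫⁻ w, L.tau (h w).1 (h w).2 ^ p ∂ρm := by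
      rw [pCost, lintegral_map mτp mh]
    have hB0 : ρm (Prod.fst ⁻¹' (toMeasurable π₁ {z : X × X | ¬ L.causal z.1 z.2})
        ∪ g ⁻¹' (toMeasurable π₂ {z : X × X | ¬ L.causal z.1 z.2})) = 0 := by
      refine measure_union_null ?_ ?_
      · rw [← Measure.map_apply measurable_fst (measurableSet_toMeasurable _ _), hmapfst,
          measure_toMeasurable]
        exact h₁.2
      · rw [← Measure.map_apply mg (measurableSet_toMeasurable _ _), hmapg,
          measure_toMeasurable]
        exact h₂.2
    have hae : ∀ᵐ w ∂ρm, (f w + gτ w) ^ p ≤ L.tau (h w).1 (h w).2 ^ p := by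
      filter_upwards [measure_eq_zero_iff_ae_notMem.mp hB0] with w hw
      rw [Set.mem_union, not_or] at hw
      have hc1 : L.causal w.1.1 w.1.2 := by
        by_contra hc
        exact hw.1 (subset_toMeasurable _ _ hc)
      have hc2 : L.causal w.1.2 w.2 := by
        by_contra hc
        exact hw.2 (subset_toMeasurable _ _ hc)
      exact ENNReal.rpow_le_rpow (L.tau_rev_triangle hc1 hc2) hp0.le
    calc pCost L p π₁ ^ (1 / p) + pCost L p π₂ ^ (1 / p)
        = (∫⁻ w, f w ^ p ∂ρm) ^ (1 / p) + (∫⁻ w, gτ w ^ p ∂ρm) ^ (1 / p) := by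
          rw [hcost1, hcost2]
      _ ≤ (∫⁻ w, (f w + gτ w) ^ p ∂ρm) ^ (1 / p) :=
          lintegral_rpow_superadd ρm mf mgτ hp0 hp1
      _ ≤ (∫⁻ w, L.tau (h w).1 (h w).2 ^ p ∂ρm) ^ (1 / p) :=
          ENNReal.rpow_le_rpow (lintegral_mono_ae hae) (by positivity)
      _ = pCost L p (ρm.map h) ^ (1 / p) := by rw [hcostπ]

end ReverseTriangleHelpers

/-- The `p`-Lorentz-Wasserstein distance satisfies the reverse triangle
inequality (with the convention `∞ - ∞ = -∞`, built into `EReal` addition where `⊥` wins). -/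
theorem ellp_reverse_triangle
    {X : Type*} [MetricSpace X] [ProperSpace X] [MeasurableSpace X] [BorelSpace X]
    (L : LorentzStructure X) (p : ℝ) (hp0 : 0 < p) (hp1 : p ≤ 1)
    (μ₀ μ₁ μ₂ : Measure X)
    [IsProbabilityMeasure μ₀] [IsProbabilityMeasure μ₁] [IsProbabilityMeasure μ₂] :
    ellp L p μ₀ μ₁ + ellp L p μ₁ μ₂ ≤ ellp L p μ₀ μ₂ := by
  classical
  have hset : ∀ μ ν : Measure X,
      {c : EReal | ∃ π : Measure (X × X), IsCausalCoupling L μ ν π ∧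
        c = ((pCost L p π ^ (1/p) : ℝ≥0∞) : EReal)}
      = ((↑) : ℝ≥0∞ → EReal) ''
          {t : ℝ≥0∞ | ∃ π : Measure (X × X), IsCausalCoupling L μ ν π ∧
            t = pCost L p π ^ (1/p)} := by
    intro μ ν
    ext c
    constructor
    · rintro ⟨π, hπ, rfl⟩
      exact ⟨_, ⟨π, hπ, rfl⟩, rfl⟩
    · rintro ⟨t, ⟨π, hπ, rfl⟩, rfl⟩
      exact ⟨π, hπ, rfl⟩
  rw [ellp, ellp, ellp, hset, hset, hset]
  by_cases h01 : {t : ℝ≥0∞ | ∃ π : Measure (X × X), IsCausalCoupling L μ₀ μ₁ π ∧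
      t = pCost L p π ^ (1/p)}.Nonempty; swap
  · rw [Set.not_nonempty_iff_eq_empty] at h01
    rw [h01, Set.image_empty, sSup_empty, EReal.bot_add]
    exact bot_le
  by_cases h12 : {t : ℝ≥0∞ | ∃ π : Measure (X × X), IsCausalCoupling L μ₁ μ₂ π ∧
      t = pCost L p π ^ (1/p)}.Nonempty; swap
  · rw [Set.not_nonempty_iff_eq_empty] at h12
    rw [h12, Set.image_empty, sSup_empty, EReal.add_bot]
    exact bot_le
  have h02 : {t : ℝ≥0∞ | ∃ π : Measure (X × X), IsCausalCoupling L μ₀ μ₂ π ∧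
      t = pCost L p π ^ (1/p)}.Nonempty := by
    obtain ⟨t, π₁, hc₁, _⟩ := h01
    obtain ⟨u, π₂, hc₂, _⟩ := h12
    obtain ⟨π, hπ, _⟩ := exists_glued_coupling L hp0 hp1 hc₁ hc₂
    exact ⟨_, π, hπ, rfl⟩
  have hmono : Monotone ((↑) : ℝ≥0∞ → EReal) := fun _ _ hab =>
    EReal.coe_ennreal_le_coe_ennreal_iff.2 hab
  have hcoeS : ∀ T' : Set ℝ≥0∞, T'.Nonempty →
      sSup (((↑) : ℝ≥0∞ → EReal) '' T') = ((sSup T' : ℝ≥0∞) : EReal) := fun T' hT' =>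
    (hmono.map_csSup_of_continuousAt continuous_coe_ennreal_ereal.continuousAt hT'
      (OrderTop.bddAbove _)).symm
  rw [hcoeS _ h01, hcoeS _ h12, hcoeS _ h02, ← EReal.coe_ennreal_add,
    EReal.coe_ennreal_le_coe_ennreal_iff]
  rw [ENNReal.sSup_add h01]
  refine iSup₂_le fun t ht => ?_
  rw [ENNReal.add_sSup h12]
  refine iSup₂_le fun u hu => ?_
  obtain ⟨π₁, hc₁, rfl⟩ := ht
  obtain ⟨π₂, hc₂, rfl⟩ := hu
  obtain ⟨π, hπ, hle⟩ := exists_glued_coupling L hp0 hp1 hc₁ hc₂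
  exact hle.trans (le_sSup ⟨π, hπ, rfl⟩)
end

section
/- Let (X,d,≪,≤,τ) be a K-globally hyperbolic Lorentzian geodesic space, p ∈ (0,1], and let μ₀, μ₁ be compactly supported Borel probability measures on X such that there exists π ∈ Π^{p-opt}_≤(μ₀,μ₁) with supp π compactly contained in {τ > 0}. If η ∈ OptGeo_{ℓ_p}(μ₀,μ₁) is an ℓ_p-dynamical optimal plan, then for all 0 ≤ s₁ < s₂ ≤ 1 the restricted-reparametrised plan η^{s₁,s₂} := (restr_{s₁}^{s₂})_♯ η, where (restr_{s₁}^{s₂} γ)_t := γ_{(1−t)s₁ + t s₂}, belongs to OptGeo_{ℓ_p}((e_{s₁})_♯ η, (e_{s₂})_♯ η). -/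
open MeasureTheory Set Filter Topology
open scoped ENNReal NNReal Classical

section Aux

variable {Y : Type*} [MetricSpace Y]

lemma restr_mem_Icc {s₁ s₂ : ℝ} (hs₁ : 0 ≤ s₁) (hs : s₁ < s₂) (hs₂ : s₂ ≤ 1)
    {r : ℝ} (hr : r ∈ Icc (0:ℝ) 1) : (1 - r) * s₁ + r * s₂ ∈ Icc (0:ℝ) 1 := by
  obtain ⟨hr0, hr1⟩ := hr
  constructor <;> nlinarith

lemma geodesic_restr (L : LorentzStructure Y) {γ : ℝ → Y}
    (hg : L.IsGeodesicCurve γ) {s₁ s₂ : ℝ} (hs₁ : 0 ≤ s₁) (hs : s₁ < s₂) (hs₂ : s₂ ≤ 1) :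
    L.IsGeodesicCurve (restrCurve s₁ s₂ γ) := by
  set u : ℝ → ℝ := fun r => (1 - r) * s₁ + r * s₂ with hu
  have hrestr : restrCurve s₁ s₂ γ = γ ∘ u := rfl
  have humem : ∀ r ∈ Icc (0:ℝ) 1, u r ∈ Icc (0:ℝ) 1 := fun r hr =>
    restr_mem_Icc hs₁ hs hs₂ hr
  have hulip : LipschitzWith (s₂ - s₁).toNNReal u := by
    apply LipschitzWith.of_dist_le_mul
    intro x y
    rw [Real.dist_eq, Real.dist_eq]
    have h1 : u x - u y = (s₂ - s₁) * (x - y) := by simp only [hu]; ring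
    have h2 : |u x - u y| = (s₂ - s₁) * |x - y| := by
      rw [h1, abs_mul, abs_of_nonneg (by linarith : (0:ℝ) ≤ s₂ - s₁)]
    rw [h2, Real.coe_toNNReal _ (by linarith : (0:ℝ) ≤ s₂ - s₁)]
  have hmono : ∀ a b : ℝ, a < b → u a < u b := by
    intro a b hab
    simp only [hu]
    nlinarith
  have e0 : u 0 = s₁ := by simp [hu]
  have e1 : u 1 = s₂ := by simp [hu]
  constructor
  · constructor
    · intro t ht
      obtain ⟨C, U, hU, hlip⟩ := hg.1.1 (u t) (humem t ht)
      refine ⟨C * (s₂ - s₁).toNNReal, u ⁻¹' U, ?_, ?_⟩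
      · have hcont : ContinuousWithinAt u (Icc (0:ℝ) 1) t :=
          (Continuous.continuousWithinAt (by fun_prop))
        have htend : Tendsto u (nhdsWithin t (Icc (0:ℝ) 1))
            (nhdsWithin (u t) (Icc (0:ℝ) 1)) :=
          hcont.tendsto_nhdsWithin (fun x hx => humem x hx)
        exact htend hU
      · exact hlip.comp (hulip.lipschitzOnWith) (fun x hx => hx)
    · intro a ha b hb hab
      exact hg.1.2 (u a) (humem a ha) (u b) (humem b hb) (hmono a b hab)
  · intro a ha b hb hab
    have hA := hg.2 (u a) (humem a ha) (u b) (humem b hb) (hmono a b hab)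
    have hB := hg.2 s₁ ⟨hs₁, le_trans hs.le hs₂⟩ s₂ ⟨le_trans hs₁ hs.le, hs₂⟩ hs
    have hre : ∀ r : ℝ, restrCurve s₁ s₂ γ r = γ (u r) := fun _ => rfl
    rw [hre a, hre b, hre 0, hre 1, e0, e1, hA, hB]
    have hdiff : u b - u a = (b - a) * (s₂ - s₁) := by simp only [hu]; ring
    rw [hdiff, ENNReal.ofReal_mul (by linarith : (0:ℝ) ≤ b - a), mul_assoc]

variable [MeasurableSpace Y] [BorelSpace Y]

/-- `restrCurve s₁ s₂` as a measurable equivalence of the space of curves (for `s₁ ≠ s₂`). -/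
noncomputable def restrEquiv (s₁ s₂ : ℝ) (h : s₁ ≠ s₂) : (ℝ → Y) ≃ᵐ (ℝ → Y) where
  toFun := restrCurve s₁ s₂
  invFun := restrCurve (-s₁ / (s₂ - s₁)) ((1 - s₁) / (s₂ - s₁))
  left_inv γ := by
    have hne : s₂ - s₁ ≠ 0 := sub_ne_zero.mpr (Ne.symm h)
    funext t
    simp only [restrCurve]
    congr 1
    field_simp
    ring
  right_inv γ := by
    have hne : s₂ - s₁ ≠ 0 := sub_ne_zero.mpr (Ne.symm h)
    funext t
    simp only [restrCurve]
    congr 1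
    field_simp
    ring
  measurable_toFun := measurable_pi_lambda _ fun _ => measurable_pi_apply _
  measurable_invFun := measurable_pi_lambda _ fun _ => measurable_pi_apply _

end Aux

/-- Under the assumptions of Statement 6, the restriction/stretching of an
`ℓ_p`-dynamical optimal plan `η` to `[s₁,s₂]` is an `ℓ_p`-dynamical optimal plan from
`(e_{s₁})_♯ η` to `(e_{s₂})_♯ η`. -/
theorem dynamical_plan_restriction
    {X : Type*} [MetricSpace X] [ProperSpace X] [MeasurableSpace X] [BorelSpace X]
    (L : LorentzStructure X) (hkgh : L.KGloballyHyperbolic) (hgeo : L.GeodesicSpace)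
    (p : ℝ) (hp0 : 0 < p) (hp1 : p ≤ 1)
    (μ₀ μ₁ : Measure X) [IsProbabilityMeasure μ₀] [IsProbabilityMeasure μ₁]
    (hc0 : IsCompact (msupport μ₀)) (hc1 : IsCompact (msupport μ₁))
    (hπ : ∃ π : Measure (X × X), IsOptCausalCoupling L p μ₀ μ₁ π ∧
      IsCompact (msupport π) ∧ msupport π ⊆ {z : X × X | 0 < L.tau z.1 z.2})
    (η : Measure (ℝ → X)) (hη : IsDynOptPlan L p μ₀ μ₁ η)
    (s₁ s₂ : ℝ) (hs₁ : 0 ≤ s₁) (hs : s₁ < s₂) (hs₂ : s₂ ≤ 1) :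
    IsDynOptPlan L p (η.map (fun γ => γ s₁)) (η.map (fun γ => γ s₂))
      (η.map (restrCurve s₁ s₂)) := by
  obtain ⟨hprob, hmap0, hmap1, hlpgeo, hae⟩ := hη
  have hδ : (0:ℝ) < s₂ - s₁ := sub_pos.mpr hs
  have hmeas : Measurable (restrCurve s₁ s₂ : (ℝ → X) → (ℝ → X)) :=
    measurable_pi_lambda _ fun _ => measurable_pi_apply _
  have key : ∀ r : ℝ, ((η.map (restrCurve s₁ s₂)).map fun γ => γ r)
      = η.map (fun γ => γ ((1 - r) * s₁ + r * s₂)) := by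
    intro r
    rw [Measure.map_map (measurable_pi_apply r) hmeas]
    rfl
  have h00 : (1 - (0:ℝ)) * s₁ + (0:ℝ) * s₂ = s₁ := by ring
  have h11 : (1 - (1:ℝ)) * s₁ + (1:ℝ) * s₂ = s₂ := by ring
  refine ⟨?_, ?_, ?_, ?_, ?_⟩
  · exact Measure.isProbabilityMeasure_map hmeas.aemeasurable
  · rw [key 0, h00]
  · rw [key 1, h11]
  · intro a b ha0 hab hb1
    simp only [key, h00, h11]
    have hmema : (1 - a) * s₁ + a * s₂ ∈ Icc (0:ℝ) 1 :=
      restr_mem_Icc hs₁ hs hs₂ ⟨ha0, le_trans hab hb1⟩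
    have hmemb : (1 - b) * s₁ + b * s₂ ∈ Icc (0:ℝ) 1 :=
      restr_mem_Icc hs₁ hs hs₂ ⟨le_trans ha0 hab, hb1⟩
    have hle : (1 - a) * s₁ + a * s₂ ≤ (1 - b) * s₁ + b * s₂ := by nlinarith
    have hA := hlpgeo ((1 - a) * s₁ + a * s₂) ((1 - b) * s₁ + b * s₂)
      hmema.1 hle hmemb.2
    have hB := hlpgeo s₁ s₂ hs₁ hs.le hs₂
    simp only at hA hB
    rw [hA, hB]
    have hdiff : ((1 - b) * s₁ + b * s₂) - ((1 - a) * s₁ + a * s₂)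
        = (b - a) * (s₂ - s₁) := by ring
    rw [hdiff, EReal.coe_mul, mul_assoc]
  · have hae' : ∀ᵐ γ ∂η, L.IsGeodesicCurve (restrCurve s₁ s₂ γ) :=
      hae.mono fun γ hγ => geodesic_restr L hγ hs₁ hs hs₂
    have hEq : η.map (restrCurve s₁ s₂)
        = η.map (restrEquiv s₁ s₂ hs.ne : (ℝ → X) ≃ᵐ (ℝ → X)) := rfl
    rw [ae_iff, hEq, MeasurableEquiv.map_apply]
    rw [ae_iff] at hae'
    exact hae'
end
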